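/- arXiv:1308.6214 — 6 statements merged into one kernel-verified Lean document; each statement's English description precedes it below -/
import Mathlib

section
/- Let V be a real vector space and let J̃ and K be linear endomorphisms of V such that J̃ ∘ J̃ = -id and (J̃ + K) ∘ (J̃ + K) = -id. Define ψ₂ = (1/2)(K + J̃ ∘ K ∘ J̃). Then (a) ψ₂ anticommutes with J̃, i.e. ψ₂ ∘ J̃ + J̃ ∘ ψ₂ = 0, and (b) K - ψ₂ = (1/2) K ∘ K ∘ J̃. -/
/-- Pointwise algebraic content of Lemma 2.6: for complex structures `J` and `J + K` on a
real vector space `V`, the projection `ψ₂ = (1/2)(K + J ∘ K ∘ J)` of `K` onto the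
`J`-anticommuting endomorphisms satisfies `ψ₂ J + J ψ₂ = 0` and `K - ψ₂ = (1/2) K² J`. -/
theorem stmt_0 {V : Type*} [AddCommGroup V] [Module ℝ V]
    (J K : V →ₗ[ℝ] V)
    (hJ : J ∘ₗ J = -LinearMap.id)
    (hJK : (J + K) ∘ₗ (J + K) = -LinearMap.id) :
    ((1 / 2 : ℝ) • (K + J ∘ₗ K ∘ₗ J)) ∘ₗ J + J ∘ₗ ((1 / 2 : ℝ) • (K + J ∘ₗ K ∘ₗ J)) = 0 ∧
    K - (1 / 2 : ℝ) • (K + J ∘ₗ K ∘ₗ J) = (1 / 2 : ℝ) • (K ∘ₗ K ∘ₗ J) := by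
  simp only [← Module.End.mul_eq_comp, ← Module.End.one_eq_id] at *
  have hJ2 : J * J = -1 := hJ
  have hq : J * K + K * J + K * K = 0 := by
    have h : (J + K) * (J + K) - J * J = J * K + K * J + K * K := by noncomm_ring
    rw [hJK, hJ] at h
    simpa using h.symm
  have key : K - J * (K * J) = K * (K * J) := by
    have h : (J * K + K * J + K * K) * J = J * K * J + K * (J * J) + K * K * J := by
      noncomm_ring
    rw [hq, hJ2] at h
    rw [← sub_eq_zero, show K - J * (K * J) - K * (K * J)
        = -(J * K * J + K * (-1) + K * K * J) by noncomm_ring, ← h]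
    simp
  constructor
  · rw [smul_mul_assoc, mul_smul_comm, ← smul_add,
      show (K + J * (K * J)) * J + J * (K + J * (K * J))
        = K * J + J * K * (J * J) + J * K + (J * J) * (K * J) by noncomm_ring, hJ2]
    rw [show K * J + J * K * -1 + J * K + -1 * (K * J) = 0 by noncomm_ring]
    simp
  · rw [← key]
    module
end

section
/- Let V be a nontrivial real normed vector space and let J̃ and K be continuous linear endomorphisms of V such that J̃ ∘ J̃ = -id, (J̃ + K) ∘ (J̃ + K) = -id, ‖J̃x‖ = ‖x‖ for all x ∈ V, and ‖K‖ ≤ 1/2 in the operator norm. Define ψ₂ = (1/2)(K + J̃ ∘ K ∘ J̃). Then ‖ψ₂‖ ≤ ‖K‖ and ‖K‖ ≤ ‖ψ₂‖ + ‖ψ₂‖². -/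
private lemma half_smul_norm {V : Type*} [NormedAddCommGroup V] [NormedSpace ℝ V]
    (A : V →L[ℝ] V) : ‖(1/2 : ℝ) • A‖ = (1/2) * ‖A‖ := by
  rw [norm_smul (1/2 : ℝ) A]
  norm_num

/-- Norm inequalities of Lemma 2.6 (almost complex structure component, at a point):
for complex structures `J` and `J + K` on a nontrivial real normed space, with `J` an
isometry and `‖K‖ ≤ 1/2`, the `J`-anticommuting projection `ψ₂ = (1/2)(K + J K J)`
satisfies `‖ψ₂‖ ≤ ‖K‖` and `‖K‖ ≤ ‖ψ₂‖ + ‖ψ₂‖²`. -/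
theorem stmt_1 {V : Type*} [NormedAddCommGroup V] [NormedSpace ℝ V] [Nontrivial V]
    (J K : V →L[ℝ] V)
    (hJ : J.comp J = -ContinuousLinearMap.id ℝ V)
    (hJK : (J + K).comp (J + K) = -ContinuousLinearMap.id ℝ V)
    (hiso : ∀ x : V, ‖J x‖ = ‖x‖)
    (hK : ‖K‖ ≤ 1 / 2) :
    ‖(1 / 2 : ℝ) • (K + J.comp (K.comp J))‖ ≤ ‖K‖ ∧
    ‖K‖ ≤ ‖(1 / 2 : ℝ) • (K + J.comp (K.comp J))‖ +
      ‖(1 / 2 : ℝ) • (K + J.comp (K.comp J))‖ ^ 2 := by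
  have hJx : ∀ x, J (J x) = -x := fun x => by
    have h := ContinuousLinearMap.ext_iff.mp hJ x
    simpa using h
  have h0 : ∀ x, J (K x) + K (J x) + K (K x) = 0 := by
    intro x
    have h := ContinuousLinearMap.ext_iff.mp hJK x
    simp only [ContinuousLinearMap.comp_apply, ContinuousLinearMap.add_apply, map_add,
      ContinuousLinearMap.neg_apply, ContinuousLinearMap.id_apply, hJx] at h
    have : -x + (J (K x) + K (J x) + K (K x)) = -x + 0 := by rw [add_zero]; linear_combination (norm := abel) h
    exact add_left_cancel this
  -- key identity: ψ₂ = K - (1/2) K∘K∘J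
  have heq : (1 / 2 : ℝ) • (K + J.comp (K.comp J)) =
      K - (1 / 2 : ℝ) • ((K.comp K).comp J) := by
    ext x
    have h := h0 (J x)
    rw [hJx, map_neg] at h
    -- h : J (K (J x)) + -(K x) + K (K (J x)) = 0
    simp only [ContinuousLinearMap.smul_apply, ContinuousLinearMap.add_apply,
      ContinuousLinearMap.comp_apply, ContinuousLinearMap.sub_apply]
    have hjkj : J (K (J x)) = K x - K (K (J x)) := by linear_combination (norm := abel) h
    rw [hjkj]
    module
  have hKnn : (0:ℝ) ≤ ‖K‖ := norm_nonneg _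
  have hJKJ : ‖J.comp (K.comp J)‖ ≤ ‖K‖ := by
    apply ContinuousLinearMap.opNorm_le_bound _ hKnn
    intro x
    simp only [ContinuousLinearMap.comp_apply]
    rw [hiso]
    calc ‖K (J x)‖ ≤ ‖K‖ * ‖J x‖ := K.le_opNorm _
      _ = ‖K‖ * ‖x‖ := by rw [hiso]
  have hb1 : ‖(1 / 2 : ℝ) • (K + J.comp (K.comp J))‖ ≤ ‖K‖ := by
    rw [half_smul_norm]
    have := norm_add_le K (J.comp (K.comp J))
    linarith
  refine ⟨hb1, ?_⟩
  have hKKJ : ‖(K.comp K).comp J‖ ≤ ‖K‖ * ‖K‖ := by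
    apply ContinuousLinearMap.opNorm_le_bound _ (mul_nonneg hKnn hKnn)
    intro x
    simp only [ContinuousLinearMap.comp_apply]
    calc ‖K (K (J x))‖ ≤ ‖K‖ * ‖K (J x)‖ := K.le_opNorm _
      _ ≤ ‖K‖ * (‖K‖ * ‖J x‖) := mul_le_mul_of_nonneg_left (K.le_opNorm _) hKnn
      _ = ‖K‖ * ‖K‖ * ‖x‖ := by rw [hiso]; ring
  have hKdecomp : K = (1 / 2 : ℝ) • (K + J.comp (K.comp J)) +
      (1 / 2 : ℝ) • ((K.comp K).comp J) := by
    rw [heq]; abel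
  set b := ‖(1 / 2 : ℝ) • (K + J.comp (K.comp J))‖ with hbdef
  have hbnn : (0:ℝ) ≤ b := norm_nonneg _
  have hupper : ‖K‖ ≤ b + (1/2) * (‖K‖ * ‖K‖) := by
    calc ‖K‖ = ‖(1 / 2 : ℝ) • (K + J.comp (K.comp J)) +
        (1 / 2 : ℝ) • ((K.comp K).comp J)‖ := by rw [← hKdecomp]
      _ ≤ b + ‖(1 / 2 : ℝ) • ((K.comp K).comp J)‖ := norm_add_le _ _
      _ ≤ b + (1/2) * (‖K‖ * ‖K‖) := by
          rw [half_smul_norm]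
          have := mul_le_mul_of_nonneg_left hKKJ (by norm_num : (0:ℝ) ≤ 1/2)
          linarith
  nlinarith [sq_nonneg (b - ‖K‖), sq_nonneg b, mul_nonneg hbnn hbnn,
    mul_nonneg hKnn hKnn, mul_le_mul_of_nonneg_left hK hKnn]
end

section
/- There exists a universal constant C > 0 with the following property. Let V be a real normed vector space, let J̃ be a continuous linear endomorphism of V with J̃ ∘ J̃ = -id and ‖J̃x‖ = ‖x‖ for all x, and let ω̃ be a continuous bilinear form on V with ω̃(X,Y) = ω̃(J̃X, J̃Y) for all X, Y and ‖ω̃‖ ≤ 1. Let (ω, J) be another such pair: J ∘ J = -id and ω(X,Y) = ω(JX, JY) for all X, Y. Set h = ω - ω̃ and K = J - J̃ and assume ‖h‖ ≤ 1/2 and ‖K‖ ≤ 1/2. Define ψ₂ = (1/2)(K + J̃ ∘ K ∘ J̃) and ψ₁(X,Y) = (1/2)(h(X,Y) + h(J̃X, J̃Y)) + (1/2)(ω̃(ψ₂X, J̃Y) + ω̃(J̃X, ψ₂Y)). Then ‖ψ₁‖ + ‖ψ₂‖ ≤ 2(‖h‖ + ‖K‖) and ‖h‖ + ‖K‖ ≤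 (‖ψ₁‖ + ‖ψ₂‖) + C(‖ψ₁‖ + ‖ψ₂‖)². -/
/-- Composition of a continuous bilinear form with continuous linear maps in each
argument: `bilinComp B f g (X, Y) = B (f X) (g Y)`. -/
noncomputable def bilinComp {V : Type} [NormedAddCommGroup V] [NormedSpace ℝ V]
    (B : V →L[ℝ] V →L[ℝ] ℝ) (f g : V →L[ℝ] V) : V →L[ℝ] V →L[ℝ] ℝ :=
  ((B.comp f).flip.comp g).flip

set_option maxHeartbeats 1000000

lemma bilinComp_apply {V : Type} [NormedAddCommGroup V] [NormedSpace ℝ V]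
    (B : V →L[ℝ] V →L[ℝ] ℝ) (f g : V →L[ℝ] V) (X Y : V) :
    bilinComp B f g X Y = B (f X) (g Y) := rfl

lemma bilinComp_norm_le {V : Type} [NormedAddCommGroup V] [NormedSpace ℝ V]
    (B : V →L[ℝ] V →L[ℝ] ℝ) (f g : V →L[ℝ] V) :
    ‖bilinComp B f g‖ ≤ ‖B‖ * ‖f‖ * ‖g‖ := by
  calc ‖bilinComp B f g‖ = ‖(B.comp f).flip.comp g‖ := ContinuousLinearMap.opNorm_flip _
    _ ≤ ‖(B.comp f).flip‖ * ‖g‖ := ContinuousLinearMap.opNorm_comp_le _ _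
    _ = ‖B.comp f‖ * ‖g‖ := by rw [ContinuousLinearMap.opNorm_flip]
    _ ≤ ‖B‖ * ‖f‖ * ‖g‖ := by
        gcongr
        exact ContinuousLinearMap.opNorm_comp_le _ _

lemma bilinComp_norm_le' {V : Type} [NormedAddCommGroup V] [NormedSpace ℝ V]
    (B : V →L[ℝ] V →L[ℝ] ℝ) (f g : V →L[ℝ] V) {β φ γ : ℝ}
    (hβ : ‖B‖ ≤ β) (hφ : ‖f‖ ≤ φ) (hγ : ‖g‖ ≤ γ) :
    ‖bilinComp B f g‖ ≤ β * φ * γ := by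
  refine (bilinComp_norm_le B f g).trans ?_
  have h1 : (0:ℝ) ≤ β := (norm_nonneg B).trans hβ
  have h2 : (0:ℝ) ≤ φ := (norm_nonneg f).trans hφ
  exact mul_le_mul (mul_le_mul hβ hφ (norm_nonneg f) h1) hγ (norm_nonneg g)
    (by positivity)

lemma arith_lemma (a k p q d e : ℝ) (ha0 : 0 ≤ a) (hk0 : 0 ≤ k) (hp0 : 0 ≤ p) (hq0 : 0 ≤ q)
    (ha : a ≤ 1/2) (hk : k ≤ 1/2) (hqk : q ≤ k) (he : e ≤ (1/2) * k^2)
    (hd : d ≤ a*k + (5/4)*k^2) (hpad : p ≤ a + d) (hapd : a ≤ p + d) (hke : k ≤ q + e) :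
    p + q ≤ 2*(a+k) ∧ a + k ≤ (p+q) + 9*(p+q)^2 := by
  have hkq : k ≤ q + (1/2)*k^2 := by linarith
  have h43 : k ≤ (4/3)*q := by nlinarith
  have had : a ≤ p + a*k + (5/4)*k^2 := by linarith
  have ha2 : a ≤ 2*p + (5/2)*k^2 := by nlinarith
  constructor
  · nlinarith
  · nlinarith [mul_nonneg hp0 hq0, sq_nonneg q, sq_nonneg (p+q), mul_le_mul_of_nonneg_left h43 hk0,
      mul_le_mul_of_nonneg_right ha2 hk0, mul_le_mul_of_nonneg_left h43 hp0, sq_nonneg k]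

/-- Pointwise (C⁰) content of Lemma 2.6: the deviation `ρ = (h, K)` of an almost
hermitian structure `(ω, J)` from a reference structure `(ω̃, J̃)` is controlled, up to a
universal quadratic error, by the tangent element `ψ = (ψ₁, ψ₂)`. -/
theorem stmt_3 :
    ∃ C : ℝ, 0 < C ∧
      ∀ (V : Type) [NormedAddCommGroup V] [NormedSpace ℝ V]
        (Jt J : V →L[ℝ] V) (ωt ω : V →L[ℝ] V →L[ℝ] ℝ),
        Jt.comp Jt = -ContinuousLinearMap.id ℝ V →
        (∀ x : V, ‖Jt x‖ = ‖x‖) →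
        (∀ X Y : V, ωt X Y = ωt (Jt X) (Jt Y)) →
        ‖ωt‖ ≤ 1 →
        J.comp J = -ContinuousLinearMap.id ℝ V →
        (∀ X Y : V, ω X Y = ω (J X) (J Y)) →
        ‖ω - ωt‖ ≤ 1 / 2 →
        ‖J - Jt‖ ≤ 1 / 2 →
        ∀ ψ₂ : V →L[ℝ] V, ψ₂ = (1 / 2 : ℝ) • ((J - Jt) + Jt.comp ((J - Jt).comp Jt)) →
        ∀ ψ₁ : V →L[ℝ] V →L[ℝ] ℝ,
          ψ₁ = (1 / 2 : ℝ) • ((ω - ωt) + bilinComp (ω - ωt) Jt Jt)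
            + (1 / 2 : ℝ) • (bilinComp ωt ψ₂ Jt + bilinComp ωt Jt ψ₂) →
        ‖ψ₁‖ + ‖ψ₂‖ ≤ 2 * (‖ω - ωt‖ + ‖J - Jt‖) ∧
        ‖ω - ωt‖ + ‖J - Jt‖ ≤ (‖ψ₁‖ + ‖ψ₂‖) + C * (‖ψ₁‖ + ‖ψ₂‖) ^ 2 := by
  refine ⟨9, by norm_num, ?_⟩
  intro V _ _ Jt J ωt ω hJt2 hJtiso hωt hωtn hJ2 hω hh hK ψ₂ hψ₂ ψ₁ hψ₁
  -- pointwise involution facts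
  have hJt2' : ∀ x : V, Jt (Jt x) = -x := by
    intro x
    have := ContinuousLinearMap.ext_iff.mp hJt2 x
    simpa using this
  have hJ2' : ∀ x : V, J (J x) = -x := by
    intro x
    have := ContinuousLinearMap.ext_iff.mp hJ2 x
    simpa using this
  -- norm of Jt
  have hJtn : ‖Jt‖ ≤ 1 := by
    refine ContinuousLinearMap.opNorm_le_bound _ zero_le_one ?_
    intro x; rw [hJtiso x, one_mul]
  -- abbreviations
  set K : V →L[ℝ] V := J - Jt with hKdef
  set h : V →L[ℝ] V →L[ℝ] ℝ := ω - ωt with hhdef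
  have hKn0 : (0:ℝ) ≤ ‖K‖ := ContinuousLinearMap.opNorm_nonneg _
  have hhn0 : (0:ℝ) ≤ ‖h‖ := ContinuousLinearMap.opNorm_nonneg _
  -- ψ₂ norm bound
  have hψ₂n : ‖ψ₂‖ ≤ ‖K‖ := by
    rw [hψ₂]
    have h1 : ‖Jt.comp (K.comp Jt)‖ ≤ ‖K‖ := by
      calc ‖Jt.comp (K.comp Jt)‖ ≤ ‖Jt‖ * ‖K.comp Jt‖ := ContinuousLinearMap.opNorm_comp_le _ _
        _ ≤ ‖Jt‖ * (‖K‖ * ‖Jt‖) := by gcongr; exact ContinuousLinearMap.opNorm_comp_le _ _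
        _ ≤ 1 * (‖K‖ * 1) := by gcongr
        _ = ‖K‖ := by ring
    calc ‖(1/2 : ℝ) • (K + Jt.comp (K.comp Jt))‖ ≤ ‖(1/2:ℝ)‖ * ‖K + Jt.comp (K.comp Jt)‖ :=
          ContinuousLinearMap.opNorm_smul_le _ _
      _ = (1/2) * ‖K + Jt.comp (K.comp Jt)‖ := by norm_num
      _ ≤ (1/2) * (‖K‖ + ‖Jt.comp (K.comp Jt)‖) := by
          gcongr; exact ContinuousLinearMap.opNorm_add_le _ _
      _ ≤ (1/2) * (‖K‖ + ‖K‖) := by gcongr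
      _ = ‖K‖ := by ring
  -- key identity for K
  have keyK : K - ψ₂ = (1/2 : ℝ) • ((K.comp K).comp Jt) := by
    rw [hψ₂]
    ext x
    simp only [ContinuousLinearMap.sub_apply, ContinuousLinearMap.smul_apply,
      ContinuousLinearMap.add_apply, ContinuousLinearMap.comp_apply, hKdef,
      map_sub, hJ2', hJt2', map_neg]
    module
  have hKψ₂ : ‖K - ψ₂‖ ≤ (1/2) * ‖K‖^2 := by
    rw [keyK]
    calc ‖(1/2 : ℝ) • ((K.comp K).comp Jt)‖ ≤ ‖(1/2:ℝ)‖ * ‖(K.comp K).comp Jt‖ :=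
          ContinuousLinearMap.opNorm_smul_le _ _
      _ = (1/2) * ‖(K.comp K).comp Jt‖ := by norm_num
      _ ≤ (1/2) * (‖K.comp K‖ * ‖Jt‖) := by gcongr; exact ContinuousLinearMap.opNorm_comp_le _ _
      _ ≤ (1/2) * ((‖K‖ * ‖K‖) * 1) := by
          gcongr
          exact ContinuousLinearMap.opNorm_comp_le _ _
      _ = (1/2) * ‖K‖^2 := by ring
  -- key identity for h
  have keyH : h - ψ₁ = (1/2 : ℝ) • (bilinComp h K Jt + bilinComp ωt (K - ψ₂) Jt
      + bilinComp h Jt K + bilinComp ωt Jt (K - ψ₂) + bilinComp ω K K) := by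
    rw [hψ₁]
    ext X Y
    simp only [ContinuousLinearMap.sub_apply, ContinuousLinearMap.smul_apply,
      ContinuousLinearMap.add_apply, bilinComp_apply, hKdef, hhdef, smul_eq_mul,
      map_sub, map_add, ContinuousLinearMap.coe_sub', Pi.sub_apply]
    have e1 := hω X Y
    have e2 := hωt X Y
    ring_nf
    linarith [e1, e2]
  -- norm of ω
  have hωn : ‖ω‖ ≤ 3/2 := by
    have : ω = h + ωt := by rw [hhdef]; abel
    rw [this]
    calc ‖h + ωt‖ ≤ ‖h‖ + ‖ωt‖ := ContinuousLinearMap.opNorm_add_le _ _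
      _ ≤ 1/2 + 1 := by gcongr
      _ = 3/2 := by norm_num
  -- norm bound for h - ψ₁
  have E1 : ‖bilinComp h K Jt‖ ≤ ‖h‖ * ‖K‖ * 1 := bilinComp_norm_le' _ _ _ le_rfl le_rfl hJtn
  have E2 : ‖bilinComp ωt (K - ψ₂) Jt‖ ≤ 1 * ((1/2) * ‖K‖^2) * 1 :=
    bilinComp_norm_le' _ _ _ hωtn hKψ₂ hJtn
  have E3 : ‖bilinComp h Jt K‖ ≤ ‖h‖ * 1 * ‖K‖ := bilinComp_norm_le' _ _ _ le_rfl hJtn le_rfl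
  have E4 : ‖bilinComp ωt Jt (K - ψ₂)‖ ≤ 1 * 1 * ((1/2) * ‖K‖^2) :=
    bilinComp_norm_le' _ _ _ hωtn hJtn hKψ₂
  have E5 : ‖bilinComp ω K K‖ ≤ (3/2) * ‖K‖ * ‖K‖ := bilinComp_norm_le' _ _ _ hωn le_rfl le_rfl
  have hhψ₁ : ‖h - ψ₁‖ ≤ ‖h‖ * ‖K‖ + (5/4) * ‖K‖^2 := by
    rw [keyH]
    refine (ContinuousLinearMap.opNorm_smul_le _ _).trans ?_
    have nsum : ‖bilinComp h K Jt + bilinComp ωt (K - ψ₂) Jt + bilinComp h Jt K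
        + bilinComp ωt Jt (K - ψ₂) + bilinComp ω K K‖
        ≤ ‖h‖ * ‖K‖ * 1 + 1 * ((1/2) * ‖K‖^2) * 1 + ‖h‖ * 1 * ‖K‖ + 1 * 1 * ((1/2) * ‖K‖^2)
          + (3/2) * ‖K‖ * ‖K‖ :=
      le_trans (ContinuousLinearMap.opNorm_add_le _ _)
        (add_le_add (le_trans (ContinuousLinearMap.opNorm_add_le _ _)
          (add_le_add (le_trans (ContinuousLinearMap.opNorm_add_le _ _)
            (add_le_add (le_trans (ContinuousLinearMap.opNorm_add_le _ _)
              (add_le_add E1 E2)) E3)) E4)) E5)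
    have hn : ‖(1/2 : ℝ)‖ = 1/2 := by norm_num
    rw [hn]
    have := mul_le_mul_of_nonneg_left nsum (by norm_num : (0:ℝ) ≤ 1/2)
    calc (1/2) * ‖bilinComp h K Jt + bilinComp ωt (K - ψ₂) Jt + bilinComp h Jt K
          + bilinComp ωt Jt (K - ψ₂) + bilinComp ω K K‖
        ≤ (1/2) * (‖h‖ * ‖K‖ * 1 + 1 * ((1/2) * ‖K‖^2) * 1 + ‖h‖ * 1 * ‖K‖
            + 1 * 1 * ((1/2) * ‖K‖^2) + (3/2) * ‖K‖ * ‖K‖) := this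
      _ = ‖h‖ * ‖K‖ + (5/4) * ‖K‖^2 := by ring
  -- triangle consequences
  have hp : ‖ψ₁‖ ≤ ‖h‖ + ‖h - ψ₁‖ := by
    calc ‖ψ₁‖ = ‖h + -(h - ψ₁)‖ := by congr 1; abel
      _ ≤ ‖h‖ + ‖-(h - ψ₁)‖ := ContinuousLinearMap.opNorm_add_le _ _
      _ = ‖h‖ + ‖h - ψ₁‖ := by rw [ContinuousLinearMap.opNorm_neg]
  have hA : ‖h‖ ≤ ‖ψ₁‖ + ‖h - ψ₁‖ := by
    calc ‖h‖ = ‖ψ₁ + (h - ψ₁)‖ := by congr 1; abel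
      _ ≤ ‖ψ₁‖ + ‖h - ψ₁‖ := ContinuousLinearMap.opNorm_add_le _ _
  have hk2 : ‖K‖ ≤ ‖ψ₂‖ + ‖K - ψ₂‖ := by
    calc ‖K‖ = ‖ψ₂ + (K - ψ₂)‖ := by congr 1; abel
      _ ≤ ‖ψ₂‖ + ‖K - ψ₂‖ := ContinuousLinearMap.opNorm_add_le _ _
  have hp0 : (0:ℝ) ≤ ‖ψ₁‖ := ContinuousLinearMap.opNorm_nonneg _
  have hq0 : (0:ℝ) ≤ ‖ψ₂‖ := ContinuousLinearMap.opNorm_nonneg _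
  exact arith_lemma ‖h‖ ‖K‖ ‖ψ₁‖ ‖ψ₂‖ ‖h - ψ₁‖ ‖K - ψ₂‖ hhn0 hKn0 hp0 hq0 hh hK hψ₂n hKψ₂
    hhψ₁ hp hA hk2
end

section
/- Let H be a real Hilbert space, let L : H → H be a continuous self-adjoint linear operator, and let u : ℝ → H be a differentiable curve satisfying u'(t) = L(u(t)) for all t ∈ ℝ. Then for every t ∈ ℝ and every h ≥ 0, ‖u(t)‖⁴ ≤ ‖u(t-h)‖² · ‖u(t+h)‖². -/
/-!
For a solution of `u' = L u` with `L` symmetric, the derivative of `s ↦ ⟪u (a - s), u (b + s)⟫`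
is `⟪u (a - s), L u (b + s)⟫ - ⟪L u (a - s), u (b + s)⟫ = 0`, so `⟪u a, u b⟫` only depends on
`a + b`. Hence `‖u t‖² = ⟪u (t - h), u (t + h)⟫`, and Cauchy–Schwarz gives the inequality.
-/

open scoped RealInnerProductSpace

section

variable {H : Type*} [NormedAddCommGroup H] [InnerProductSpace ℝ H]
  {L : H →ₗ[ℝ] H} {u : ℝ → H}

theorem hasDerivAt_inner_comp_sub_comp_add (hL : L.IsSymmetric)
    (hu : ∀ t, HasDerivAt u (L (u t)) t) (a b s : ℝ) :
    HasDerivAt (fun s => ⟪u (a - s), u (b + s)⟫) 0 s := by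
  have hsub := (hu (a - s)).comp_const_sub a s
  have hadd := (hu (b + s)).comp_const_add b s
  have hzero : ⟪u (a - s), L (u (b + s))⟫ + ⟪-L (u (a - s)), u (b + s)⟫ = 0 := by
    rw [inner_neg_left, hL]
    ring
  simpa only [hzero] using hsub.inner ℝ hadd

theorem inner_comp_sub_comp_add_eq (hL : L.IsSymmetric)
    (hu : ∀ t, HasDerivAt u (L (u t)) t) (a b s : ℝ) :
    ⟪u (a - s), u (b + s)⟫ = ⟪u a, u b⟫ := by
  have hderiv := hasDerivAt_inner_comp_sub_comp_add hL hu a b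
  simpa using is_const_of_deriv_eq_zero (fun s => (hderiv s).differentiableAt)
    (fun s => (hderiv s).deriv) s 0

end

theorem stmt_5_general {H : Type*} [NormedAddCommGroup H] [InnerProductSpace ℝ H]
    (L : H →L[ℝ] H) (hL : ∀ x y : H, ⟪L x, y⟫ = ⟪x, L y⟫)
    (u : ℝ → H) (hu : ∀ t : ℝ, HasDerivAt u (L (u t)) t) :
    ∀ t h : ℝ, 0 ≤ h → ‖u t‖ ^ 4 ≤ ‖u (t - h)‖ ^ 2 * ‖u (t + h)‖ ^ 2 := by
  intro t h _
  have hsymm : (L : H →ₗ[ℝ] H).IsSymmetric := hL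
  have hcenter : ⟪u (t - h), u (t + h)⟫ = ‖u t‖ ^ 2 := by
    rw [inner_comp_sub_comp_add_eq hsymm hu, real_inner_self_eq_norm_sq]
  calc ‖u t‖ ^ 4 = ⟪u (t - h), u (t + h)⟫ * ⟪u (t - h), u (t + h)⟫ := by rw [hcenter]; ring
    _ ≤ ⟪u (t - h), u (t - h)⟫ * ⟪u (t + h), u (t + h)⟫ := real_inner_mul_inner_self_le _ _
    _ = ‖u (t - h)‖ ^ 2 * ‖u (t + h)‖ ^ 2 := by simp only [real_inner_self_eq_norm_sq]

/-- Log-convexity of the energy `t ↦ ‖u t‖²` for solutions of the linear equation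
`u' = L u` with `L` continuous self-adjoint on a real Hilbert space (key inequality in
the proof of Lemma 4.8). -/
theorem stmt_5 {H : Type*} [NormedAddCommGroup H] [InnerProductSpace ℝ H] [CompleteSpace H]
    (L : H →L[ℝ] H) (hL : ∀ x y : H, ⟪L x, y⟫ = ⟪x, L y⟫)
    (u : ℝ → H) (hu : ∀ t : ℝ, HasDerivAt u (L (u t)) t) :
    ∀ t h : ℝ, 0 ≤ h → ‖u t‖ ^ 4 ≤ ‖u (t - h)‖ ^ 2 * ‖u (t + h)‖ ^ 2 :=
  stmt_5_general L hL u hu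
end

section
/- Let H be a real Hilbert space, let L : H → H be a continuous self-adjoint linear operator with ⟨Lx, x⟩ ≤ 0 for all x ∈ H, and let u : ℝ → H be differentiable with u'(t) = L(u(t)) for all t. Let t₀ ∈ ℝ, T > 0 and λ > 0. Then t ↦ ‖u(t)‖ is nonincreasing, and if sup{‖u(t)‖² : t ∈ [t₀ + T/2, t₀ + T]} ≤ e^{-Tλ/2} · sup{‖u(t)‖² : t ∈ [t₀, t₀ + T/2]}, then sup{‖u(t)‖² : t ∈ [t₀, t₀ + T/2]} ≤ e^{-Tλ/2} · sup{‖u(t)‖² : t ∈ [t₀ - T/2, t₀]}. -/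
open scoped RealInnerProductSpace

/-!
Since `L` is negative semi-definite, `‖u t‖²` has derivative `2⟪L u, u⟫ ≤ 0`, so it is
nonincreasing and the supremum over each interval is attained at its left end point. Since `L`
is self-adjoint, `s ↦ ⟪u (t - s), u (t + s)⟫` has derivative `⟪u, L u⟫ - ⟪L u, u⟫ = 0`, hence
`‖u t‖² = ⟪u (t - s), u (t + s)⟫ ≤ ‖u (t - s)‖ ‖u (t + s)‖`: the function `log ‖u t‖` is
midpoint convex. With `t = t₀` and `s = T / 2`, decay of `‖u‖²` by the factor `e^{-Tλ/2}` from
`t₀` to `t₀ + T/2` therefore forces the same decay from `t₀ - T/2` to `t₀`.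
-/

section LinearFlow

variable {H : Type*} [NormedAddCommGroup H] [InnerProductSpace ℝ H]
  {A : H →ₗ[ℝ] H} {u : ℝ → H}

theorem antitone_norm_sq_of_hasDerivAt (hneg : ∀ x, ⟪A x, x⟫ ≤ 0)
    (hu : ∀ t, HasDerivAt u (A (u t)) t) : Antitone fun t => ‖u t‖ ^ 2 := by
  have hderiv (t : ℝ) : HasDerivAt (fun t => ‖u t‖ ^ 2) (2 * ⟪u t, A (u t)⟫) t :=
    (hu t).norm_sq
  refine antitone_of_deriv_nonpos (fun t => (hderiv t).differentiableAt) fun t => ?_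
  rw [(hderiv t).deriv, real_inner_comm]
  linarith [hneg (u t)]

theorem inner_eq_of_add_eq_of_hasDerivAt (hA : A.IsSymmetric)
    (hu : ∀ t, HasDerivAt u (A (u t)) t) {a b c d : ℝ} (h : a + b = c + d) :
    ⟪u a, u b⟫ = ⟪u c, u d⟫ := by
  set g : ℝ → ℝ := fun s => ⟪u (a + s), u (b - s)⟫
  have hg (s : ℝ) : HasDerivAt g 0 s := by
    have hleft : HasDerivAt (fun s => u (a + s)) ((1 : ℝ) • A (u (a + s))) s :=
      (hu _).scomp s ((hasDerivAt_id s).const_add a)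
    have hright : HasDerivAt (fun s => u (b - s)) ((-1 : ℝ) • A (u (b - s))) s :=
      (hu _).scomp s ((hasDerivAt_id s).const_sub b)
    refine (hleft.inner ℝ hright).congr_deriv ?_
    rw [inner_smul_left, inner_smul_right, hA]
    simp
  have hconst := is_const_of_deriv_eq_zero (fun s => (hg s).differentiableAt)
    (fun s => (hg s).deriv) 0 (c - a)
  simpa [g, show b - (c - a) = d by linarith] using hconst

theorem norm_sq_le_norm_mul_norm_of_hasDerivAt (hA : A.IsSymmetric)
    (hu : ∀ t, HasDerivAt u (A (u t)) t) (t s : ℝ) :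
    ‖u t‖ ^ 2 ≤ ‖u (t - s)‖ * ‖u (t + s)‖ := by
  calc ‖u t‖ ^ 2 = ⟪u (t - s), u (t + s)⟫ := by
        rw [inner_eq_of_add_eq_of_hasDerivAt hA hu (show t - s + (t + s) = t + t by ring),
          real_inner_self_eq_norm_sq]
    _ ≤ ‖u (t - s)‖ * ‖u (t + s)‖ := real_inner_le_norm _ _

end LinearFlow

theorem le_mul_of_sq_le_mul_of_le_mul {x y z E : ℝ} (hx : 0 ≤ x) (hy : 0 ≤ y) (hE : 0 ≤ E)
    (hconvex : y ^ 2 ≤ x * z) (hdecay : z ≤ E * y) : y ≤ E * x := by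
  rcases hy.eq_or_lt with rfl | hy
  · positivity
  · refine le_of_mul_le_mul_right ?_ hy
    calc y * y = y ^ 2 := by ring
      _ ≤ x * (E * y) := hconvex.trans (mul_le_mul_of_nonneg_left hdecay hx)
      _ = E * x * y := by ring

theorem Antitone.csSup_image_Icc {f : ℝ → ℝ} (hf : Antitone f) {a b : ℝ} (hab : a ≤ b) :
    sSup (f '' Set.Icc a b) = f a :=
  (hf.map_isLeast (isLeast_Icc hab)).csSup_eq

theorem stmt_6_general {H : Type*} [NormedAddCommGroup H] [InnerProductSpace ℝ H]
    (L : H →L[ℝ] H) (hL : ∀ x y : H, ⟪L x, y⟫ = ⟪x, L y⟫)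
    (hneg : ∀ x : H, ⟪L x, x⟫ ≤ 0)
    (u : ℝ → H) (hu : ∀ t : ℝ, HasDerivAt u (L (u t)) t)
    (t₀ T lam : ℝ) (hT : 0 < T) :
    Antitone (fun t => ‖u t‖) ∧
    (sSup ((fun t => ‖u t‖ ^ 2) '' Set.Icc (t₀ + T / 2) (t₀ + T)) ≤
        Real.exp (-T * lam / 2) *
          sSup ((fun t => ‖u t‖ ^ 2) '' Set.Icc t₀ (t₀ + T / 2)) →
      sSup ((fun t => ‖u t‖ ^ 2) '' Set.Icc t₀ (t₀ + T / 2)) ≤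
        Real.exp (-T * lam / 2) *
          sSup ((fun t => ‖u t‖ ^ 2) '' Set.Icc (t₀ - T / 2) t₀)) := by
  have hsq : Antitone fun t => ‖u t‖ ^ 2 :=
    antitone_norm_sq_of_hasDerivAt (A := (L : H →ₗ[ℝ] H)) hneg hu
  refine ⟨fun a b hab => (pow_le_pow_iff_left₀ (norm_nonneg _) (norm_nonneg _)
    two_ne_zero).1 (hsq hab), fun hdecay => ?_⟩
  rw [hsq.csSup_image_Icc (a := t₀ + T / 2) (by linarith),
    hsq.csSup_image_Icc (a := t₀) (by linarith)] at hdecay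
  rw [hsq.csSup_image_Icc (a := t₀) (by linarith),
    hsq.csSup_image_Icc (a := t₀ - T / 2) (by linarith)]
  refine le_mul_of_sq_le_mul_of_le_mul (by positivity) (by positivity) (Real.exp_pos _).le
    ?_ hdecay
  calc (‖u t₀‖ ^ 2) ^ 2 ≤ (‖u (t₀ - T / 2)‖ * ‖u (t₀ + T / 2)‖) ^ 2 :=
        pow_le_pow_left₀ (by positivity) (norm_sq_le_norm_mul_norm_of_hasDerivAt hL hu _ _) 2
    _ = ‖u (t₀ - T / 2)‖ ^ 2 * ‖u (t₀ + T / 2)‖ ^ 2 := by ring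

/-- Lemma 4.8 for the linear equation `u' = L u` with `L` continuous, self-adjoint and
negative semi-definite on a real Hilbert space: `t ↦ ‖u t‖` is nonincreasing, and
exponential decay of the sup of `‖u‖²` at a later time interval implies exponential
decay at an earlier interval. -/
theorem stmt_6 {H : Type*} [NormedAddCommGroup H] [InnerProductSpace ℝ H] [CompleteSpace H]
    (L : H →L[ℝ] H) (hL : ∀ x y : H, ⟪L x, y⟫ = ⟪x, L y⟫)
    (hneg : ∀ x : H, ⟪L x, x⟫ ≤ 0)
    (u : ℝ → H) (hu : ∀ t : ℝ, HasDerivAt u (L (u t)) t)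
    (t₀ T lam : ℝ) (hT : 0 < T) (hlam : 0 < lam) :
    Antitone (fun t => ‖u t‖) ∧
    (sSup ((fun t => ‖u t‖ ^ 2) '' Set.Icc (t₀ + T / 2) (t₀ + T)) ≤
        Real.exp (-T * lam / 2) *
          sSup ((fun t => ‖u t‖ ^ 2) '' Set.Icc t₀ (t₀ + T / 2)) →
      sSup ((fun t => ‖u t‖ ^ 2) '' Set.Icc t₀ (t₀ + T / 2)) ≤
        Real.exp (-T * lam / 2) *
          sSup ((fun t => ‖u t‖ ^ 2) '' Set.Icc (t₀ - T / 2) t₀)) :=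
  stmt_6_general L hL hneg u hu t₀ T lam hT
end

section
/- Let f : ℝ → ℝ be a nonnegative differentiable function, B : ℝ → ℝ a nonnegative continuous function, and let a ≥ 0, C ≥ 0, λ > 0. Assume that f'(t) ≤ a·f(t) + B(t) for all t ≥ 0, that f and B are integrable on [t, ∞) for every t ≥ 0, and that ∫_t^∞ f(s) ds ≤ C·e^{-λt} and ∫_t^∞ B(s) ds ≤ C·e^{-λt} for all t ≥ 0. Then there exists a constant C' ≥ 0, depending only on a, C and λ, such that f(t) ≤ C'·e^{-λt} for all t ≥ 1. -/
/-!
Average `f` over the window `[t - 1/2, t]`: some point `s` of the window has `f s` at most twice the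
tail integral of `f` from `t - 1/2`. From `s` to `t`, the integrating factor `exp (-a x)` turns
`f' ≤ a f + B` into `f t ≤ exp (a / 2) (f s + ∫ₛᵗ B)`, and both terms are bounded by tail integrals
that decay like `exp (-λ (t - 1/2))`.
-/

open MeasureTheory Set Real

theorem le_exp_mul_mul_add_integral_of_hasDerivAt_le {f f' B : ℝ → ℝ} {a s t : ℝ} (ha : 0 ≤ a)
    (hst : s ≤ t) (hf : ContinuousOn f (Icc s t)) (hf' : ∀ x ∈ Ioo s t, HasDerivAt f (f' x) x)
    (hB : ContinuousOn B (Icc s t)) (hB₀ : ∀ x ∈ Ioo s t, 0 ≤ B x)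
    (hle : ∀ x ∈ Ioo s t, f' x ≤ a * f x + B x) :
    f t ≤ exp (a * (t - s)) * (f s + ∫ x in s..t, B x) := by
  set w : ℝ → ℝ := fun x ↦ exp (-a * (x - s))
  have hw : ∀ x, HasDerivAt w (w x * (-a * 1)) x := fun x ↦
    (((hasDerivAt_id x).sub_const s).const_mul (-a)).exp
  have hw_le_one : ∀ x ∈ Ioo s t, w x ≤ 1 := fun x hx ↦
    exp_le_one_iff.2 (mul_nonpos_of_nonpos_of_nonneg (by linarith) (by linarith [hx.1]))
  have hprim : ∀ x ∈ Ioo s t, HasDerivAt (fun y ↦ ∫ u in s..y, B u) (B x) x := fun x hx ↦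
    intervalIntegral.integral_hasDerivAt_right
      ((hB.mono (Icc_subset_Icc_right hx.2.le)).intervalIntegrable_of_Icc hx.1.le)
      ((hB.mono Ioo_subset_Icc_self).stronglyMeasurableAtFilter isOpen_Ioo x hx)
      (hB.continuousAt (Icc_mem_nhds hx.1 hx.2))
  -- `x ↦ ∫ₛˣ B - w x f x` is monotone: its derivative is `B - w (f' - a f) ≥ (1 - w) B ≥ 0`
  have hmono : MonotoneOn (fun x ↦ (∫ u in s..x, B u) - w x * f x) (Icc s t) := by
    refine monotoneOn_of_hasDerivWithinAt_nonneg (convex_Icc s t)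
      (f' := fun x ↦ B x - (w x * (-a * 1) * f x + w x * f' x)) ?_ (fun x hx ↦ ?_)
      (fun x hx ↦ ?_)
    · have := intervalIntegral.continuousOn_primitive_interval (μ := volume) (a := s) (b := t)
        (f := B) (by rw [uIcc_of_le hst]; exact hB.integrableOn_Icc)
      rw [uIcc_of_le hst] at this
      have hw_cont : Continuous w := continuous_iff_continuousAt.2 fun x ↦ (hw x).continuousAt
      exact this.sub (hw_cont.continuousOn.mul hf)
    · rw [interior_Icc] at hx
      exact ((hprim x hx).sub ((hw x).mul (hf' x hx))).hasDerivWithinAt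
    · rw [interior_Icc] at hx
      have h₁ : w x * (f' x - a * f x) ≤ w x * B x :=
        mul_le_mul_of_nonneg_left (by linarith [hle x hx]) (exp_pos _).le
      have h₂ : w x * B x ≤ B x := mul_le_of_le_one_left (hB₀ x hx) (hw_le_one x hx)
      linarith
  have key := hmono (left_mem_Icc.2 hst) (right_mem_Icc.2 hst) hst
  simp only [intervalIntegral.integral_same, w, sub_self, mul_zero, exp_zero, one_mul] at key
  calc f t = exp (a * (t - s)) * (exp (-a * (t - s)) * f t) := by
        rw [← mul_assoc, ← exp_add]; simp
    _ ≤ exp (a * (t - s)) * (f s + ∫ x in s..t, B x) := by gcongr; linarith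

theorem intervalIntegral_le_setIntegral_Ici {f : ℝ → ℝ} {c u v : ℝ} (hcu : c ≤ u) (huv : u ≤ v)
    (hf₀ : ∀ x ∈ Ici c, 0 ≤ f x) (hf : IntegrableOn f (Ici c)) :
    ∫ x in u..v, f x ≤ ∫ x in Ici c, f x := by
  rw [intervalIntegral.integral_of_le huv]
  exact setIntegral_mono_set hf ((ae_restrict_iff' measurableSet_Ici).2 (ae_of_all _ hf₀))
    (ae_of_all _ fun x hx ↦ hcu.trans hx.1.le)

theorem le_exp_mul_mul_div_add_setIntegral_Ici {f f' B : ℝ → ℝ} {a h t : ℝ} (ha : 0 ≤ a)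
    (hh : 0 < h) (hf : ∀ x ∈ Icc (t - h) t, HasDerivAt f (f' x) x)
    (hB : ContinuousOn B (Icc (t - h) t)) (hle : ∀ x ∈ Ioo (t - h) t, f' x ≤ a * f x + B x)
    (hf₀ : ∀ x ∈ Ici (t - h), 0 ≤ f x) (hB₀ : ∀ x ∈ Ici (t - h), 0 ≤ B x)
    (hfi : IntegrableOn f (Ici (t - h))) (hBi : IntegrableOn B (Ici (t - h))) :
    f t ≤ exp (a * h) * ((∫ x in Ici (t - h), f x) / h + ∫ x in Ici (t - h), B x) := by
  have hth : t - h ≤ t := by linarith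
  have hfc : ContinuousOn f (Icc (t - h) t) := fun x hx ↦ (hf x hx).continuousAt.continuousWithinAt
  obtain ⟨s, ⟨hs₁, hs₂⟩, hfs⟩ := exists_eq_interval_average (by linarith : t - h ≠ t)
    (by rwa [uIcc_of_le hth])
  rw [min_eq_left hth] at hs₁
  rw [max_eq_right hth] at hs₂
  have hst : Icc s t ⊆ Icc (t - h) t := Icc_subset_Icc_left hs₁.le
  have hgronwall := le_exp_mul_mul_add_integral_of_hasDerivAt_le ha hs₂.le (hfc.mono hst)
    (fun x hx ↦ hf x (hst (Ioo_subset_Icc_self hx))) (hB.mono hst)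
    (fun x hx ↦ hB₀ x (hs₁.trans hx.1).le)
    (fun x hx ↦ hle x ⟨hs₁.trans hx.1, hx.2⟩)
  have hfs_le : f s ≤ (∫ x in Ici (t - h), f x) / h := by
    rw [hfs, interval_average_eq_div, sub_sub_cancel]
    gcongr
    exact intervalIntegral_le_setIntegral_Ici le_rfl hth hf₀ hfi
  have hB_le : ∫ x in s..t, B x ≤ ∫ x in Ici (t - h), B x :=
    intervalIntegral_le_setIntegral_Ici hs₁.le hs₂.le hB₀ hBi
  calc f t ≤ exp (a * (t - s)) * (f s + ∫ x in s..t, B x) := hgronwall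
    _ ≤ exp (a * h) * ((∫ x in Ici (t - h), f x) / h + ∫ x in Ici (t - h), B x) := by
      gcongr
      · exact add_nonneg (hf₀ s hs₁.le) (intervalIntegral.integral_nonneg hs₂.le
          fun x hx ↦ hB₀ x (hs₁.le.trans hx.1))
      · linarith

theorem stmt_10_general (a C lam : ℝ) (ha : 0 ≤ a) (hC : 0 ≤ C) :
    ∃ C' : ℝ, 0 ≤ C' ∧
      ∀ f B : ℝ → ℝ,
        (∀ t, 0 ≤ f t) → Differentiable ℝ f →
        (∀ t, 0 ≤ B t) → Continuous B →
        (∀ t, 0 ≤ t → deriv f t ≤ a * f t + B t) →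
        (∀ t, 0 ≤ t → IntegrableOn f (Set.Ici t)) →
        (∀ t, 0 ≤ t → IntegrableOn B (Set.Ici t)) →
        (∀ t, 0 ≤ t → (∫ s in Set.Ici t, f s) ≤ C * Real.exp (-lam * t)) →
        (∀ t, 0 ≤ t → (∫ s in Set.Ici t, B s) ≤ C * Real.exp (-lam * t)) →
        ∀ t, 1 ≤ t → f t ≤ C' * Real.exp (-lam * t) := by
  refine ⟨3 * C * exp ((a + lam) / 2), by positivity, ?_⟩
  intro f B hf₀ hf hB₀ hB hle hfi hBi hf_tail hB_tail t ht
  have hc : 0 ≤ t - 1 / 2 := by linarith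
  have hwindow := le_exp_mul_mul_div_add_setIntegral_Ici (f' := deriv f) (h := 1 / 2) ha
    one_half_pos (fun x _ ↦ (hf x).hasDerivAt) hB.continuousOn (fun x hx ↦ hle x (hc.trans hx.1.le))
    (fun x _ ↦ hf₀ x) (fun x _ ↦ hB₀ x) (hfi _ hc) (hBi _ hc)
  calc f t ≤ exp (a * (1 / 2)) * (C * exp (-lam * (t - 1 / 2)) / (1 / 2)
        + C * exp (-lam * (t - 1 / 2))) := by
        refine hwindow.trans ?_
        gcongr
        exacts [hf_tail _ hc, hB_tail _ hc]
    _ = 3 * C * exp (a * (1 / 2) + -lam * (t - 1 / 2)) := by rw [exp_add]; ring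
    _ = 3 * C * exp ((a + lam) / 2) * exp (-lam * t) := by
        rw [mul_assoc (3 * C), ← exp_add]; ring_nf

/-- Analytic core of the parabolic regularity arguments in Lemmas 3.3 and 5.2:
integrated-in-time exponential decay of an energy quantity, together with a
differential inequality controlling its growth, upgrades to pointwise-in-time
exponential decay, with a constant depending only on `a`, `C` and `λ`. -/
theorem stmt_10 (a C lam : ℝ) (ha : 0 ≤ a) (hC : 0 ≤ C) (hlam : 0 < lam) :
    ∃ C' : ℝ, 0 ≤ C' ∧
      ∀ f B : ℝ → ℝ,
        (∀ t, 0 ≤ f t) → Differentiable ℝ f →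
        (∀ t, 0 ≤ B t) → Continuous B →
        (∀ t, 0 ≤ t → deriv f t ≤ a * f t + B t) →
        (∀ t, 0 ≤ t → IntegrableOn f (Set.Ici t)) →
        (∀ t, 0 ≤ t → IntegrableOn B (Set.Ici t)) →
        (∀ t, 0 ≤ t → (∫ s in Set.Ici t, f s) ≤ C * Real.exp (-lam * t)) →
        (∀ t, 0 ≤ t → (∫ s in Set.Ici t, B s) ≤ C * Real.exp (-lam * t)) →
        ∀ t, 1 ≤ t → f t ≤ C' * Real.exp (-lam * t) :=
  stmt_10_general a C lam ha hC
end
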